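/- Let R* be an oriented graph on N vertices with δ(R*) + δ⁺(R*) + δ⁻(R*) ≥ (3/2 + α)N for some α > 0, and let 𝒞 be a 1-factor of R* (a partition of the vertex set into directed cycles). Define, for a vertex set X, the set X⁻ of predecessors on the cycles of 𝒞 (i.e., X⁻ = σ⁻¹(X) where σ is the permutation of V(R*) given by the 1-factor). Then for any distinct vertices x, y there exists a shifted x–y walk traversing at most 2/α cycles of 𝒞, where a shifted x–y walk is a walk of the form x a₁ C₁ b₁ a₂ C₂ b₂ … a_t C_t b_t y with C₁,…,C_t (not necessarily distinct) cycles from 𝒞, aᵢ the successor of bᵢ on Cᵢ, and x a₁, bᵢ a_{i+1}, b_t y edges of R*. -/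

import Mathlib

open Finset
open scoped Classical

noncomputable section

variable {V : Type*} [Fintype V]

/-- The outdegree of `x` in the digraph `G`. -/
def outDeg (G : V → V → Prop) (x : V) : ℕ := (univ.filter fun y => G x y).card

/-- The indegree of `x` in the digraph `G`. -/
def inDeg (G : V → V → Prop) (x : V) : ℕ := (univ.filter fun y => G y x).card

/-- The (total) degree of `x`: the number of vertices joined to `x` by an edge. -/
def deg (G : V → V → Prop) (x : V) : ℕ := (univ.filter fun y => G x y ∨ G y x).card

/-- The minimum outdegree `δ⁺(G)`. -/
def minOutDeg (G : V → V → Prop) [Nonempty V] : ℕ := univ.inf' univ_nonempty (outDeg G)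

/-- The minimum indegree `δ⁻(G)`. -/
def minInDeg (G : V → V → Prop) [Nonempty V] : ℕ := univ.inf' univ_nonempty (inDeg G)

/-- The minimum degree `δ(G)`. -/
def minDeg (G : V → V → Prop) [Nonempty V] : ℕ := univ.inf' univ_nonempty (deg G)

/-- An oriented graph: no loops and no pair of antiparallel edges. -/
def Oriented (G : V → V → Prop) : Prop := (∀ x, ¬ G x x) ∧ ∀ x y, G x y → ¬ G y x

/-- The out-neighbourhood `N⁺(X)` of a set of vertices. -/
def outNbhd (G : V → V → Prop) (X : Finset V) : Finset V :=
  univ.filter fun y => ∃ x ∈ X, G x y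


/-! Let `E i` be the set of vertices in which a shifted walk from `x` through at most `i` cycles
can end (`E 0 = {x}`). If `w` is an out-neighbour of `E i`, then `σ⁻¹ w ∈ E (i + 1)`, so
`|E (i + 1)| ≥ |N⁺(E i)|`. By the expansion property, `|E i|` grows by `αN/2` at each step
as long as it is at most `(1 - α)N`, so it exceeds `(1 - α)N` by `i = ⌊2/α⌋`. As `δ⁻ > αN`,
`y` then has an in-neighbour in `E i`, which closes the walk. -/

lemma card_add_card_le_card_univ {s t : Finset V} (h : Disjoint s t) :
    #s + #t ≤ Fintype.card V :=
  (card_union_of_disjoint h).symm.trans_le (card_le_univ _)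

section Degrees

variable [Nonempty V] {G : V → V → Prop}

lemma minOutDeg_le_outDeg (v : V) : minOutDeg G ≤ outDeg G v := inf'_le _ (mem_univ v)

lemma minInDeg_le_inDeg (v : V) : minInDeg G ≤ inDeg G v := inf'_le _ (mem_univ v)

lemma minDeg_le_deg (v : V) : minDeg G ≤ deg G v := inf'_le _ (mem_univ v)

end Degrees

section OutNbhd

variable {G : V → V → Prop} {X : Finset V} {v : V}

lemma mem_outNbhd_of_mem {w : V} (hv : v ∈ X) (h : G v w) : w ∈ outNbhd G X :=
  mem_filter.2 ⟨mem_univ _, v, hv, h⟩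

variable [Nonempty V]

lemma minOutDeg_le_card_outNbhd (hX : X.Nonempty) : minOutDeg G ≤ #(outNbhd G X) := by
  obtain ⟨v, hv⟩ := hX
  exact (minOutDeg_le_outDeg v).trans
    (card_le_card fun w hw => mem_outNbhd_of_mem hv (mem_filter.1 hw).2)

lemma minInDeg_add_card_le_card (hv : v ∉ outNbhd G X) : minInDeg G + #X ≤ Fintype.card V :=
  (Nat.add_le_add_right (minInDeg_le_inDeg v) _).trans <| card_add_card_le_card_univ <|
    disjoint_left.2 fun _ hw hwX => hv (mem_outNbhd_of_mem hwX (mem_filter.1 hw).2)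

lemma minDeg_add_card_sdiff_outNbhd_le_card (hv : v ∈ X \ outNbhd G X) :
    minDeg G + #(X \ outNbhd G X) ≤ Fintype.card V := by
  obtain ⟨hvX, hvY⟩ := mem_sdiff.1 hv
  refine (Nat.add_le_add_right (minDeg_le_deg v) _).trans <| card_add_card_le_card_univ <|
    disjoint_left.2 fun w hw hwS => ?_
  rcases (mem_filter.1 hw).2 with hvw | hwv
  · exact (mem_sdiff.1 hwS).2 (mem_outNbhd_of_mem hvX hvw)
  · exact hvY (mem_outNbhd_of_mem (mem_sdiff.1 hwS).1 hwv)

end OutNbhd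

namespace Oriented

variable {G : V → V → Prop}

omit [Fintype V] in
protected lemma flip (hG : Oriented G) : Oriented (flip G) := ⟨hG.1, fun x y h => hG.2 y x h⟩

omit [Fintype V] in
lemma two_mul_sum_card_filter_add_card_le (hG : Oriented G) (P : Finset V) :
    2 * ∑ v ∈ P, #{w ∈ P | G v w} + #P ≤ #P * #P := by
  have hpair : ∀ v ∈ P, #{w ∈ P | G v w} + #{w ∈ P | G w v} + 1 ≤ #P := by
    intro v hv
    have hdisj : Disjoint {w ∈ P | G v w} {w ∈ P | G w v} :=
      disjoint_filter.2 fun w _ hvw hwv => hG.2 v w hvw hwv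
    have hsub : {w ∈ P | G v w} ∪ {w ∈ P | G w v} ⊆ P.erase v := by
      intro w hw
      simp only [mem_union, mem_filter] at hw
      rcases hw with ⟨hw, h⟩ | ⟨hw, h⟩ <;>
        exact mem_erase.2 ⟨by rintro rfl; exact hG.1 w h, hw⟩
    have := card_le_card hsub
    rw [card_union_of_disjoint hdisj, card_erase_of_mem hv] at this
    have := card_pos.2 ⟨v, hv⟩
    omega
  have hcomm : ∑ v ∈ P, #{w ∈ P | G w v} = ∑ v ∈ P, #{w ∈ P | G v w} := by
    simp only [card_filter]
    exact sum_comm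
  have := sum_le_sum hpair
  simp only [sum_add_distrib, sum_const, smul_eq_mul, mul_one, hcomm] at this
  omega

omit [Fintype V] in
lemma exists_two_mul_card_filter_add_one_le (hG : Oriented G) {P : Finset V} (hP : P.Nonempty) :
    ∃ v ∈ P, 2 * #{w ∈ P | G v w} + 1 ≤ #P := by
  refine exists_le_of_sum_le hP ?_
  simpa [sum_add_distrib, mul_sum] using hG.two_mul_sum_card_filter_add_card_le P

variable [Nonempty V]

lemma two_mul_minOutDeg_add_one_le (hG : Oriented G) {P Q : Finset V} (hP : P.Nonempty)
    (hPQ : ∀ v ∈ P, ∀ w, G v w → w ∈ P ∨ w ∈ Q) : 2 * minOutDeg G + 1 ≤ #P + 2 * #Q := by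
  obtain ⟨v, hv, hout⟩ := hG.exists_two_mul_card_filter_add_one_le hP
  have : outDeg G v ≤ #{w ∈ P | G v w} + #Q := by
    refine (card_le_card fun w hw => ?_).trans (card_union_le _ _)
    have hvw := (mem_filter.1 hw).2
    rcases hPQ v hv w hvw with h | h
    · exact mem_union_left _ (mem_filter.2 ⟨h, hvw⟩)
    · exact mem_union_right _ h
  have := minOutDeg_le_outDeg (G := G) v
  omega

lemma two_mul_minOutDeg_add_one_le_card (hG : Oriented G) :
    2 * minOutDeg G + 1 ≤ Fintype.card V := by
  simpa using hG.two_mul_minOutDeg_add_one_le (Q := ∅) univ_nonempty (by simp)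

lemma minDeg_add_one_le_card (hG : Oriented G) : minDeg G + 1 ≤ Fintype.card V := by
  obtain ⟨v⟩ := ‹Nonempty V›
  have hv : deg G v + #{v} ≤ Fintype.card V :=
    card_add_card_le_card_univ <| disjoint_singleton_right.2 fun h =>
      (mem_filter.1 h).2.elim (hG.1 v) (hG.1 v)
  rw [card_singleton] at hv
  exact (Nat.add_le_add_right (minDeg_le_deg v) 1).trans hv

lemma two_mul_minOutDeg_add_one_le_of_inter_outNbhd (hG : Oriented G) {X : Finset V}
    (h : (X ∩ outNbhd G X).Nonempty) :
    2 * minOutDeg G + 1 ≤ #(X ∩ outNbhd G X) + 2 * #(outNbhd G X \ X) := by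
  refine hG.two_mul_minOutDeg_add_one_le h fun v hv w hvw => ?_
  have hw := mem_outNbhd_of_mem (mem_inter.1 hv).1 hvw
  by_cases hwX : w ∈ X
  · exact .inl (mem_inter.2 ⟨hwX, hw⟩)
  · exact .inr (mem_sdiff.2 ⟨hw, hwX⟩)

lemma two_mul_minInDeg_add_one_le_of_compl_union_outNbhd (hG : Oriented G) {X : Finset V}
    (h : (X ∪ outNbhd G X)ᶜ.Nonempty) :
    2 * minInDeg G + 1 ≤ #(X ∪ outNbhd G X)ᶜ + 2 * #(outNbhd G X \ X) := by
  refine hG.flip.two_mul_minOutDeg_add_one_le h fun w hw v hvw => ?_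
  have hv : v ∉ X := fun hv => mem_compl.1 hw (mem_union_right _ (mem_outNbhd_of_mem hv hvw))
  by_cases hvY : v ∈ outNbhd G X
  · exact .inr (mem_sdiff.2 ⟨hvY, hv⟩)
  · exact .inl (mem_compl.2 (by simp [hv, hvY]))

lemma lt_minInDeg (hG : Oriented G) {α : ℝ}
    (hdeg : (3 / 2 + α) * (Fintype.card V : ℝ) ≤ (minDeg G + minOutDeg G + minInDeg G : ℝ)) :
    α * Fintype.card V < minInDeg G := by
  have h₁ : (minDeg G : ℝ) + 1 ≤ Fintype.card V := by exact_mod_cast hG.minDeg_add_one_le_card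
  have h₂ : 2 * (minOutDeg G : ℝ) + 1 ≤ Fintype.card V := by
    exact_mod_cast hG.two_mul_minOutDeg_add_one_le_card
  linarith

/-- Split `V` into `A = X ∩ N⁺(X)`, `S = X \ N⁺(X)`, `B = N⁺(X) \ X` and the rest `U`. If
`|B| < |S| + αN/2`, the bounds on `δ⁺`, `δ⁻` and `δ` coming from nonempty parts among `A`, `U`
and `S` contradict the degree condition in every case. -/
theorem card_add_le_card_outNbhd (hG : Oriented G) {α : ℝ} (hα : 0 < α)
    (hdeg : (3 / 2 + α) * (Fintype.card V : ℝ) ≤ (minDeg G + minOutDeg G + minInDeg G : ℝ))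
    {X : Finset V} (hX : X.Nonempty) (hXc : (#X : ℝ) ≤ (1 - α) * Fintype.card V) :
    (#X : ℝ) + α * Fintype.card V / 2 ≤ #(outNbhd G X) := by
  set Y := outNbhd G X
  have hX_card : (#(X ∩ Y) : ℝ) + #(X \ Y) = #X := by
    exact_mod_cast card_inter_add_card_sdiff X Y
  have hY_card : (#(X ∩ Y) : ℝ) + #(Y \ X) = #Y := by
    exact_mod_cast (inter_comm X Y ▸ card_inter_add_card_sdiff Y X :)
  have hV_card : (#(X ∪ Y)ᶜ : ℝ) + #X + #(Y \ X) = Fintype.card V := by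
    have : #(X ∪ Y) = #X + #(Y \ X) := by
      rw [← card_union_of_disjoint disjoint_sdiff, union_sdiff_self_eq_union]
    have := card_compl_add_card (X ∪ Y)
    exact_mod_cast (by omega : #(X ∪ Y)ᶜ + #X + #(Y \ X) = Fintype.card V)
  have hA : (#(X ∩ Y) : ℝ) = 0 ∨ 2 * (minOutDeg G : ℝ) + 1 ≤ #(X ∩ Y) + 2 * #(Y \ X) := by
    rcases (X ∩ Y).eq_empty_or_nonempty with h | h
    · simp [h]
    · exact .inr (by exact_mod_cast hG.two_mul_minOutDeg_add_one_le_of_inter_outNbhd h)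
  have hU : (#(X ∪ Y)ᶜ : ℝ) = 0 ∨ 2 * (minInDeg G : ℝ) + 1 ≤ #(X ∪ Y)ᶜ + 2 * #(Y \ X) := by
    rcases (X ∪ Y)ᶜ.eq_empty_or_nonempty with h | h
    · simp [h]
    · exact .inr (by exact_mod_cast hG.two_mul_minInDeg_add_one_le_of_compl_union_outNbhd h)
  have hS : (#(X \ Y) : ℝ) = 0 ∨ ((minDeg G : ℝ) + #(X \ Y) ≤ Fintype.card V ∧
      (minInDeg G : ℝ) + #X ≤ Fintype.card V ∧ (minOutDeg G : ℝ) ≤ #Y) := by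
    rcases (X \ Y).eq_empty_or_nonempty with h | ⟨v, hv⟩
    · simp [h]
    · exact .inr ⟨by exact_mod_cast minDeg_add_card_sdiff_outNbhd_le_card hv,
        by exact_mod_cast minInDeg_add_card_le_card (mem_sdiff.1 hv).2,
        by exact_mod_cast minOutDeg_le_card_outNbhd hX⟩
  have hδ : (minDeg G : ℝ) + 1 ≤ Fintype.card V := by exact_mod_cast hG.minDeg_add_one_le_card
  have hX₁ : (1 : ℝ) ≤ #X := by exact_mod_cast card_pos.2 hX
  have hαn : 0 < α * Fintype.card V := by
    have : (0 : ℝ) < Fintype.card V := by exact_mod_cast Fintype.card_pos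
    positivity
  by_contra! h
  rcases hA with hA | hA <;> rcases hU with hU | hU <;> rcases hS with hS | ⟨hS₁, hS₂, hS₃⟩ <;>
    linarith

end Oriented

/-- The vertices `b_t` in which a shifted walk `x a₁ C₁ b₁ … a_t C_t b_t` with `t ≤ i` can end
(`x` itself for `t = 0`). The walk is encoded by `[b₁, …, b_t]`: going around `C_j` from
`a_j = σ b_j` to `b_j` needs no edge condition, only `x → σ b₁` and `b_j → σ b_{j+1}` do. -/
def shiftedWalkEnds (G : V → V → Prop) (σ : Equiv.Perm V) (x : V) (i : ℕ) : Finset V :=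
  univ.filter fun u => ∃ l : List V,
    l.length ≤ i ∧ (x :: l).IsChain (fun u b => G u (σ b)) ∧ l.getLastD x = u

section ShiftedWalks

variable {G : V → V → Prop} {σ : Equiv.Perm V} {x : V}

lemma self_mem_shiftedWalkEnds (i : ℕ) : x ∈ shiftedWalkEnds G σ x i :=
  mem_filter.2 ⟨mem_univ _, [], by simp, by simp, rfl⟩

lemma shiftedWalkEnds_mono : Monotone (shiftedWalkEnds G σ x) := by
  intro i j hij u hu
  obtain ⟨l, hl, hchain, hu⟩ := (mem_filter.1 hu).2
  exact mem_filter.2 ⟨mem_univ _, l, hl.trans hij, hchain, hu⟩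

lemma image_outNbhd_shiftedWalkEnds_subset (i : ℕ) :
    (outNbhd G (shiftedWalkEnds G σ x i)).image σ.symm ⊆ shiftedWalkEnds G σ x (i + 1) := by
  intro b hb
  obtain ⟨w, hw, rfl⟩ := mem_image.1 hb
  obtain ⟨u, hu, huw⟩ := (mem_filter.1 hw).2
  obtain ⟨l, hl, hchain, rfl⟩ := (mem_filter.1 hu).2
  refine mem_filter.2 ⟨mem_univ _, l ++ [σ.symm w], by simpa using hl, ?_, List.getLastD_concat⟩
  rw [← List.cons_append]
  exact hchain.append (by simp) (by simpa [List.getLast?_cons] using huw)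

lemma card_outNbhd_shiftedWalkEnds_le (i : ℕ) :
    #(outNbhd G (shiftedWalkEnds G σ x i)) ≤ #(shiftedWalkEnds G σ x (i + 1)) :=
  (card_image_of_injective _ σ.symm.injective).symm.trans_le
    (card_le_card (image_outNbhd_shiftedWalkEnds_subset i))

end ShiftedWalks

namespace Oriented

variable [Nonempty V] {G : V → V → Prop} {α : ℝ} {σ : Equiv.Perm V} {x : V}

lemma one_add_mul_le_card_shiftedWalkEnds (hG : Oriented G) (hα : 0 < α)
    (hdeg : (3 / 2 + α) * (Fintype.card V : ℝ) ≤ (minDeg G + minOutDeg G + minInDeg G : ℝ))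
    {i : ℕ} (hi : (#(shiftedWalkEnds G σ x i) : ℝ) ≤ (1 - α) * Fintype.card V) :
    1 + i * (α * Fintype.card V / 2) ≤ #(shiftedWalkEnds G σ x i) := by
  induction i with
  | zero => simpa using card_pos.2 ⟨x, self_mem_shiftedWalkEnds (G := G) (σ := σ) 0⟩
  | succ i ih =>
    have hmono : (#(shiftedWalkEnds G σ x i) : ℝ) ≤ #(shiftedWalkEnds G σ x (i + 1)) := by
      exact_mod_cast card_le_card (shiftedWalkEnds_mono (G := G) (σ := σ) (x := x) i.le_succ)
    have hexp := hG.card_add_le_card_outNbhd hα hdeg ⟨x, self_mem_shiftedWalkEnds i⟩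
      (hmono.trans hi)
    have hstep : (#(outNbhd G (shiftedWalkEnds G σ x i)) : ℝ) ≤ #(shiftedWalkEnds G σ x (i + 1)) :=
      by exact_mod_cast card_outNbhd_shiftedWalkEnds_le (G := G) (σ := σ) (x := x) i
    push_cast
    linarith [ih (hmono.trans hi)]

lemma lt_card_shiftedWalkEnds_floor (hG : Oriented G) (hα : 0 < α)
    (hdeg : (3 / 2 + α) * (Fintype.card V : ℝ) ≤ (minDeg G + minOutDeg G + minInDeg G : ℝ)) :
    (1 - α) * Fintype.card V < #(shiftedWalkEnds G σ x ⌊2 / α⌋₊) := by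
  by_contra! h
  have hgrowth := hG.one_add_mul_le_card_shiftedWalkEnds hα hdeg h
  have hfloor : 2 < (⌊2 / α⌋₊ + 1) * α := (div_lt_iff₀ hα).1 (Nat.lt_floor_add_one _)
  have hn : (0 : ℝ) < Fintype.card V := by exact_mod_cast Fintype.card_pos
  nlinarith [mul_lt_mul_of_pos_right hfloor hn]

end Oriented

theorem stmt10_general [Nonempty V] (G : V → V → Prop) (α : ℝ) (hα : 0 < α)
    (hor : Oriented G)
    (hdeg : (3 / 2 + α) * (Fintype.card V : ℝ) ≤ (minDeg G + minOutDeg G + minInDeg G : ℝ))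
    (σ : Equiv.Perm V)
    (x y : V) :
    ∃ l : List V, (l.length : ℝ) ≤ 2 / α ∧
      List.Chain (fun u b => G u (σ b)) x l ∧ G (l.getLastD x) y := by
  have hE := hor.lt_card_shiftedWalkEnds_floor (σ := σ) (x := x) hα hdeg
  have hy : α * Fintype.card V < #{u | G u y} := (hor.lt_minInDeg hdeg).trans_le
    (by exact_mod_cast minInDeg_le_inDeg y)
  have hcard : (Fintype.card V : ℝ) < #(shiftedWalkEnds G σ x ⌊2 / α⌋₊) + #{u | G u y} := by
    linarith
  obtain ⟨u, hu⟩ := inter_nonempty_of_card_lt_card_add_card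
    (subset_univ (shiftedWalkEnds G σ x ⌊2 / α⌋₊)) (subset_univ {v | G v y})
    (by rw [card_univ]; exact_mod_cast hcard)
  obtain ⟨hu, huy⟩ := mem_inter.1 hu
  obtain ⟨l, hl, hchain, rfl⟩ := (mem_filter.1 hu).2
  refine ⟨l, ?_, hchain, (mem_filter.1 huy).2⟩
  calc (l.length : ℝ) ≤ ⌊2 / α⌋₊ := by exact_mod_cast hl
    _ ≤ 2 / α := Nat.floor_le (by positivity)

/-- Given a 1-factor (encoded by a permutation `σ` with `v → σ v` an edge
for every `v`, whose cycles are the cycles of the 1-factor), any two distinct vertices are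
joined by a shifted walk traversing at most `2/α` cycles.  A shifted `x`–`y` walk entering
the cycles at `a i = σ (b i)` and leaving them at `b i` is encoded by the list
`[b 1, …, b t]`: the required edges are `x → σ (b 1)`, `b i → σ (b (i+1))` and `b t → y`
(the travel from `σ (b i)` around its cycle to `b i` is automatic). -/
theorem stmt10 [Nonempty V] (G : V → V → Prop) (α : ℝ) (hα : 0 < α)
    (hor : Oriented G)
    (hdeg : (3 / 2 + α) * (Fintype.card V : ℝ) ≤ (minDeg G + minOutDeg G + minInDeg G : ℝ))
    (σ : Equiv.Perm V) (hσ : ∀ v, G v (σ v))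
    (x y : V) (hxy : x ≠ y) :
    ∃ l : List V, (l.length : ℝ) ≤ 2 / α ∧
      List.Chain (fun u b => G u (σ b)) x l ∧ G (l.getLastD x) y :=
  stmt10_general G α hα hor hdeg σ x y
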